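/- arXiv:1402.3958 — 5 statements merged into one kernel-verified Lean document; each statement's English description precedes it below -/
import Mathlib

section
/- Let g be a finite-dimensional real compact semisimple Lie algebra (so the Killing form κ is negative definite), let L, N ∈ g, let V = range(ad L), and let P : g → g be the κ-orthogonal projection onto V. Then for all X, Y ∈ g with [L, X] = [L, [L, N]], one has −κ(P X, P Y) = κ(N, [L, Y]). Equivalently, the double bracket vector [L, [L, N]] is the gradient, with respect to the normal metric on the adjoint orbit through L, of the function H(ξ) = κ(ξ, N) restricted to the orbit. -/
/-- Let `g` be a finite-dimensional real compact semisimple Lie algebra, so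
the Killing form `κ` is negative definite. Let `L, N ∈ g`, `V = range (ad L)`, and let
`P : g → g` be the `κ`-orthogonal projection onto `V` (i.e. `P x ∈ V` and `x − P x ⊥ V`).
Then for all `X, Y ∈ g` with `⁅L, X⁆ = ⁅L, ⁅L, N⁆⁆` one has
`−κ(P X, P Y) = κ(N, ⁅L, Y⁆)`: the double bracket vector `⁅L,⁅L,N⁆⁆` is the gradient of
`H(ξ) = κ(ξ, N)` on the adjoint orbit with respect to the normal metric. -/
theorem double_bracket_is_normal_metric_gradient
    (g : Type*) [LieRing g] [LieAlgebra ℝ g] [FiniteDimensional ℝ g]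
    [LieAlgebra.IsSemisimple ℝ g]
    (hneg : ∀ x : g, x ≠ 0 → killingForm ℝ g x x < 0)
    (L N : g) (P : g →ₗ[ℝ] g)
    (hP_mem : ∀ x : g, P x ∈ LinearMap.range (LieAlgebra.ad ℝ g L))
    (hP_orth : ∀ x : g, ∀ v ∈ LinearMap.range (LieAlgebra.ad ℝ g L),
        killingForm ℝ g (x - P x) v = 0)
    (X Y : g) (hX : ⁅L, X⁆ = ⁅L, ⁅L, N⁆⁆) :
    -(killingForm ℝ g (P X) (P Y)) = killingForm ℝ g N ⁅L, Y⁆ := by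
  set κ := killingForm ℝ g with hκ
  -- nondegeneracy from negative definiteness
  have nondeg : ∀ z : g, (∀ a : g, κ z a = 0) → z = 0 := by
    intro z hz
    by_contra h
    exact absurd (hz z) (ne_of_lt (hneg z h))
  -- vectors orthogonal to V are killed by ad L
  have orth_ker : ∀ z : g, (∀ v ∈ LinearMap.range (LieAlgebra.ad ℝ g L), κ z v = 0) →
      ⁅L, z⁆ = 0 := by
    intro z hz
    apply nondeg
    intro a
    have h1 : κ ⁅L, z⁆ a = - κ z ⁅L, a⁆ :=
      LieModule.traceForm_apply_lie_apply' ℝ g g L z a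
    have h2 : κ z ⁅L, a⁆ = 0 := hz ⁅L, a⁆ ⟨a, rfl⟩
    rw [h1, h2, neg_zero]
  -- ⁅L, Y⁆ = ⁅L, P Y⁆
  have hPY0 : ⁅L, Y - P Y⁆ = 0 := by
    apply orth_ker
    intro v hv
    exact hP_orth Y v hv
  have hLY : ⁅L, P Y⁆ = ⁅L, Y⁆ := by
    have := hPY0
    rw [lie_sub, sub_eq_zero] at this
    exact this.symm
  obtain ⟨Z, hZ⟩ := hP_mem Y
  have hZ' : ⁅L, Z⁆ = P Y := hZ
  -- κ (P X) (P Y) = κ X (P Y)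
  have step1 : κ (P X) (P Y) = κ X (P Y) := by
    have h := hP_orth X (P Y) (hP_mem Y)
    have : κ X (P Y) - κ (P X) (P Y) = 0 := by
      simpa [map_sub] using h
    linarith
  -- κ X (P Y) = κ ⁅L,N⁆ (P Y)
  have step2 : κ X (P Y) = κ ⁅L, N⁆ (P Y) := by
    rw [← hZ']
    have h1 : κ ⁅X, L⁆ Z = κ X ⁅L, Z⁆ := LieModule.traceForm_apply_lie_apply ℝ g g X L Z
    have h2 : κ ⁅L, X⁆ Z = - κ X ⁅L, Z⁆ := by
      have hs : ⁅L, X⁆ = -⁅X, L⁆ := by rw [lie_skew]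
      rw [hs, map_neg, LinearMap.neg_apply, h1]
    have h3 : κ ⁅L, ⁅L, N⁆⁆ Z = - κ ⁅L, N⁆ ⁅L, Z⁆ :=
      LieModule.traceForm_apply_lie_apply' ℝ g g L ⁅L, N⁆ Z
    rw [hX] at h2
    rw [h3] at h2
    linarith
  -- κ ⁅L,N⁆ (P Y) = - κ N ⁅L, Y⁆
  have step3 : κ ⁅L, N⁆ (P Y) = - κ N ⁅L, Y⁆ := by
    have h := LieModule.traceForm_apply_lie_apply' ℝ g g L N (P Y)
    rw [hLY] at h
    exact h
  rw [step1, step2, step3, neg_neg]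
end

section
/- Let g be a finite-dimensional real compact semisimple Lie algebra (Killing form κ negative definite), let L ∈ g, let V = range(ad L), and let P : g → g be the κ-orthogonal projection onto V. Then there exists a unique linear map A : V → V such that κ(A[L,X], [L,Y]) = κ(L, [X,Y]) for all X, Y ∈ g, and for all X, Y ∈ g one has κ(A[L,X], A[L,Y]) = κ(P X, P Y). (This says that on a regular adjoint orbit of a compact semisimple Lie algebra, the double bracket metric τ_db equals minus the normal metric: τ_db = −n.) -/
/-- Let `g` be a finite-dimensional real compact semisimple Lie algebra
(Killing form `κ` negative definite), `L ∈ g`, `V = range (ad L)`, `P` the `κ`-orthogonal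
projection onto `V`. Then there exists a unique linear map `A : V → V` with
`κ(A ⁅L,X⁆, ⁅L,Y⁆) = κ(L, ⁅X,Y⁆)` for all `X, Y`, and any such `A` satisfies
`κ(A ⁅L,X⁆, A ⁅L,Y⁆) = κ(P X, P Y)`: the double bracket metric equals minus the normal
metric on the adjoint orbit. -/
theorem double_bracket_metric_eq_neg_normal_metric
    (g : Type*) [LieRing g] [LieAlgebra ℝ g] [FiniteDimensional ℝ g]
    [LieAlgebra.IsSemisimple ℝ g]
    (hneg : ∀ x : g, x ≠ 0 → killingForm ℝ g x x < 0)
    (L : g) (P : g →ₗ[ℝ] g)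
    (hP_mem : ∀ x : g, P x ∈ LinearMap.range (LieAlgebra.ad ℝ g L))
    (hP_orth : ∀ x : g, ∀ v ∈ LinearMap.range (LieAlgebra.ad ℝ g L),
        killingForm ℝ g (x - P x) v = 0) :
    (∃! A : LinearMap.range (LieAlgebra.ad ℝ g L) →ₗ[ℝ] LinearMap.range (LieAlgebra.ad ℝ g L),
        ∀ X Y : g,
          killingForm ℝ g (A ⟨⁅L, X⁆, X, LieAlgebra.ad_apply ℝ g L X⟩ : g) ⁅L, Y⁆ =
            killingForm ℝ g L ⁅X, Y⁆) ∧
      ∀ A : LinearMap.range (LieAlgebra.ad ℝ g L) →ₗ[ℝ] LinearMap.range (LieAlgebra.ad ℝ g L),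
        (∀ X Y : g,
            killingForm ℝ g (A ⟨⁅L, X⁆, X, LieAlgebra.ad_apply ℝ g L X⟩ : g) ⁅L, Y⁆ =
              killingForm ℝ g L ⁅X, Y⁆) →
        ∀ X Y : g,
          killingForm ℝ g (A ⟨⁅L, X⁆, X, LieAlgebra.ad_apply ℝ g L X⟩ : g)
              (A ⟨⁅L, Y⁆, Y, LieAlgebra.ad_apply ℝ g L Y⟩ : g) =
            killingForm ℝ g (P X) (P Y) := by
  classical
  set κ := killingForm ℝ g with hκ
  set adL := LieAlgebra.ad ℝ g L with hadL
  set V := LinearMap.range adL with hV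
  -- basic facts
  have hsymm : ∀ x y : g, κ x y = κ y x := fun x y => LieModule.traceForm_comm ℝ g g x y
  have hinv : ∀ x y z : g, κ ⁅x, y⁆ z = κ x ⁅y, z⁆ := fun x y z =>
    LieModule.traceForm_apply_lie_apply ℝ g g x y z
  have hdef : ∀ v : g, κ v v = 0 → v = 0 := by
    intro v hv
    by_contra h
    exact absurd hv (ne_of_lt (hneg v h))
  have hPX : ∀ x w : g, κ (P x) ⁅L, w⁆ = κ x ⁅L, w⁆ := by
    intro x w
    have h0 : κ (x - P x) ⁅L, w⁆ = 0 := hP_orth x _ ⟨w, LieAlgebra.ad_apply ℝ g L w⟩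
    have := map_sub κ x (P x)
    have : κ x ⁅L, w⁆ - κ (P x) ⁅L, w⁆ = 0 := by
      simpa [map_sub] using h0
    linarith
  have hker_orth : ∀ Z : g, ⁅L, Z⁆ = 0 → ∀ w : g, κ Z ⁅L, w⁆ = 0 := by
    intro Z hZ w
    have : κ ⁅Z, L⁆ w = κ Z ⁅L, w⁆ := hinv Z L w
    rw [← this]
    have : ⁅Z, L⁆ = (0 : g) := by rw [← lie_skew, hZ, neg_zero]
    simp [this]
  have hPker : ∀ Z : g, ⁅L, Z⁆ = 0 → P Z = 0 := by
    intro Z hZ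
    apply hdef
    obtain ⟨W, hW⟩ := hP_mem Z
    have hPZ : P Z = ⁅L, W⁆ := by rw [← hW]; exact (LieAlgebra.ad_apply ℝ g L W).symm
    have h1 : κ Z (P Z) = 0 := by rw [hPZ]; exact hker_orth Z hZ W
    have h2 : κ (Z - P Z) (P Z) = 0 := hP_orth Z _ (hP_mem Z)
    have : κ Z (P Z) - κ (P Z) (P Z) = 0 := by simpa [map_sub] using h2
    linarith
  -- the canonical map
  have hnegmem : ∀ x : g, -P x ∈ V := fun x => V.neg_mem (hP_mem x)
  set f : g →ₗ[ℝ] V := LinearMap.codRestrict V (-P) hnegmem with hf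
  have hkerf : LinearMap.ker adL ≤ LinearMap.ker f := by
    intro Z hZ
    have hZ' : ⁅L, Z⁆ = 0 := by
      rwa [LinearMap.mem_ker, hadL, LieAlgebra.ad_apply] at hZ
    have : P Z = 0 := hPker Z hZ'
    apply Subtype.ext
    simp [hf, LinearMap.codRestrict_apply, this]
  set A₀ : V →ₗ[ℝ] V :=
    (Submodule.liftQ (LinearMap.ker adL) f hkerf) ∘ₗ
      adL.quotKerEquivRange.symm.toLinearMap with hA₀
  have hA₀_apply : ∀ X : g,
      (A₀ ⟨⁅L, X⁆, X, LieAlgebra.ad_apply ℝ g L X⟩ : g) = -P X := by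
    intro X
    have he : (⟨⁅L, X⁆, X, LieAlgebra.ad_apply ℝ g L X⟩ : V) =
        ⟨adL X, LinearMap.mem_range_self adL X⟩ := by
      apply Subtype.ext
      simp [hadL, LieAlgebra.ad_apply]
    rw [hA₀]
    simp only [LinearMap.coe_comp, Function.comp_apply, LinearEquiv.coe_coe, he]
    rw [adL.quotKerEquivRange_symm_apply_image X]
    have : Submodule.liftQ (LinearMap.ker adL) f hkerf ((LinearMap.ker adL).mkQ X) = f X :=
      Submodule.liftQ_apply _ f X
    rw [this]
    simp [hf, LinearMap.codRestrict_apply]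
  have hbracket : ∀ X Y : g, κ (-P X) ⁅L, Y⁆ = κ L ⁅X, Y⁆ := by
    intro X Y
    have h1 : κ (P X) ⁅L, Y⁆ = κ X ⁅L, Y⁆ := hPX X Y
    have h2 : κ X ⁅L, Y⁆ = κ ⁅X, L⁆ Y := (hinv X L Y).symm
    have h3 : κ ⁅L, X⁆ Y = κ L ⁅X, Y⁆ := hinv L X Y
    have h4 : ⁅X, L⁆ = -⁅L, X⁆ := by rw [← lie_skew]
    have h5 : κ ⁅X, L⁆ Y = -(κ ⁅L, X⁆ Y) := by rw [h4, map_neg, LinearMap.neg_apply]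
    have h6 : κ (-P X) ⁅L, Y⁆ = -(κ (P X) ⁅L, Y⁆) := by rw [map_neg, LinearMap.neg_apply]
    rw [h6, h1, h2, h5, ← h3]
    ring
  have hA₀_prop : ∀ X Y : g,
      κ (A₀ ⟨⁅L, X⁆, X, LieAlgebra.ad_apply ℝ g L X⟩ : g) ⁅L, Y⁆ = κ L ⁅X, Y⁆ := by
    intro X Y
    rw [hA₀_apply X]
    exact hbracket X Y
  -- key: any A satisfying the property equals -P on brackets
  have hA_eq : ∀ A : V →ₗ[ℝ] V,
      (∀ X Y : g, κ (A ⟨⁅L, X⁆, X, LieAlgebra.ad_apply ℝ g L X⟩ : g) ⁅L, Y⁆ = κ L ⁅X, Y⁆) →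
      ∀ X : g, (A ⟨⁅L, X⁆, X, LieAlgebra.ad_apply ℝ g L X⟩ : g) = -P X := by
    intro A hA X
    set a : g := (A ⟨⁅L, X⁆, X, LieAlgebra.ad_apply ℝ g L X⟩ : g) with ha
    have hamem : a ∈ V := (A ⟨⁅L, X⁆, X, LieAlgebra.ad_apply ℝ g L X⟩).2
    set u : g := a + P X with hu
    have humem : u ∈ V := V.add_mem hamem (hP_mem X)
    have hu_orth : ∀ w : g, κ u ⁅L, w⁆ = 0 := by
      intro w
      have h1 : κ a ⁅L, w⁆ = κ L ⁅X, w⁆ := hA X w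
      have h2 : κ (P X) ⁅L, w⁆ = κ X ⁅L, w⁆ := hPX X w
      have h3 : κ X ⁅L, w⁆ = -κ ⁅L, X⁆ w := by
        rw [← hinv X L w]
        have h4 : ⁅X, L⁆ = -⁅L, X⁆ := by rw [← lie_skew]
        rw [h4, map_neg, LinearMap.neg_apply]
      have h4 : κ ⁅L, X⁆ w = κ L ⁅X, w⁆ := hinv L X w
      have : κ u ⁅L, w⁆ = κ a ⁅L, w⁆ + κ (P X) ⁅L, w⁆ := by simp [hu, map_add]
      rw [this, h1, h2, h3, h4]
      ring
    have hu0 : u = 0 := by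
      apply hdef
      obtain ⟨W, hW⟩ := humem
      have hW' : u = ⁅L, W⁆ := by rw [← hW]; exact (LieAlgebra.ad_apply ℝ g L W).symm
      calc κ u u = κ u ⁅L, W⁆ := by rw [← hW']
        _ = 0 := hu_orth W
    exact eq_neg_of_add_eq_zero_left hu0
  refine ⟨⟨A₀, hA₀_prop, ?_⟩, ?_⟩
  · intro A hA
    apply LinearMap.ext
    intro v
    obtain ⟨X, hX⟩ := v.2
    have hv : v = ⟨⁅L, X⁆, X, LieAlgebra.ad_apply ℝ g L X⟩ := by
      apply Subtype.ext
      rw [LieAlgebra.ad_apply] at hX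
      exact hX.symm
    rw [hv]
    apply Subtype.ext
    rw [hA_eq A hA X, hA₀_apply X]
  · intro A hA X Y
    rw [hA_eq A hA X, hA_eq A hA Y]
    simp [map_neg]
end

section
/- For (u, v) ∈ ℝ² with u² + v² < 1, let s = 1 − u² − v², let (x, y, z) = Φ(u,v) = (2u/s, 2v/s, (1+u²+v²)/s), let M(x,y,z) = (1/2)·((z²−y², xy, xz), (xy, z²−x², yz), (xz, yz, x²+y²)), and set α_u = (1/(1+z), 0, −x/(1+z)²), α_v = (0, 1/(1+z), −y/(1+z)²). Then the 2×2 matrix T with entries T₁₁ = α_uᵀMα_u, T₁₂ = T₂₁ = α_uᵀMα_v, T₂₂ = α_vᵀMα_v is invertible and T⁻¹ = (8/s²)·I₂. Hence the double bracket metric on ℍ² in the stereographic disc coordinates (u,v) is τ_db = (8/(1−u²−v²)²)·(du² + dv²), i.e. twice the hyperbolic metric of the Poincaré open disc model. -/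
/-!
Write `p = Φ(u,v)` and `K = diag(1, 1, -1)` for the Killing form. Then `2M = p pᵀ - ⟨p,p⟩ K`,
and `⟨p,p⟩ = -1` on `ℍ²`. Since `1 + z = 2/s`, the covectors are `α_u = (s/2)(1, 0, -u)` and
`α_v = (s/2)(0, 1, -v)`; these two vectors pair with `p` to `u` and `v`, so the form
`(a, b) ↦ (a·p)(b·p) + aᵀKb` is the identity on them, and `T = (s²/8) I₂`.
-/

open Matrix

theorem dotProduct_vecMulVec_sub_smul_mulVec {n R : Type*} [Fintype n] [CommRing R]
    (p a b : n → R) (c : R) (B : Matrix n n R) :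
    a ⬝ᵥ ((vecMulVec p p - c • B) *ᵥ b) = (a ⬝ᵥ p) * (p ⬝ᵥ b) - c * (a ⬝ᵥ B *ᵥ b) := by
  rw [sub_mulVec, vecMulVec_mulVec, smul_mulVec, dotProduct_sub, dotProduct_smul, dotProduct_smul]
  simp only [MulOpposite.smul_eq_mul_unop, MulOpposite.unop_op, smul_eq_mul]

theorem isUnit_smul_one_and_inv_eq {n K : Type*} [Fintype n] [DecidableEq n] [Field K] {c : K}
    (hc : c ≠ 0) : IsUnit (c • 1 : Matrix n n K) ∧ (c • 1 : Matrix n n K)⁻¹ = c⁻¹ • 1 := by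
  have hmul : (c • 1 : Matrix n n K) * (c⁻¹ • 1) = 1 := by
    rw [smul_mul_smul_comm, mul_inv_cancel₀ hc, one_mul, one_smul]
  exact ⟨(isUnit_iff_isUnit_det _).mpr (isUnit_det_of_right_inverse hmul), inv_eq_right_inv hmul⟩

def sl2Killing : Matrix (Fin 3) (Fin 3) ℝ := diagonal ![1, 1, -1]

theorem dotProduct_sl2Killing_mulVec (a b : Fin 3 → ℝ) :
    a ⬝ᵥ sl2Killing *ᵥ b = a 0 * b 0 + a 1 * b 1 - a 2 * b 2 := by
  simp only [sl2Killing, dotProduct, mulVec_diagonal, Fin.sum_univ_three, cons_val_zero,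
    cons_val_one, cons_val_two, head_cons, tail_cons]
  ring

theorem sl2DoubleBracket_eq_vecMulVec_sub (x y z : ℝ) :
    !![z ^ 2 - y ^ 2, x * y, x * z;
       x * y, z ^ 2 - x ^ 2, y * z;
       x * z, y * z, x ^ 2 + y ^ 2] =
      vecMulVec ![x, y, z] ![x, y, z] - (![x, y, z] ⬝ᵥ sl2Killing *ᵥ ![x, y, z]) • sl2Killing := by
  rw [dotProduct_sl2Killing_mulVec]
  ext i j
  fin_cases i <;> fin_cases j <;> simp [vecMulVec, sl2Killing] <;> ring

noncomputable def invStereographic (u v : ℝ) : Fin 3 → ℝ :=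
  ![2 * u / (1 - u ^ 2 - v ^ 2), 2 * v / (1 - u ^ 2 - v ^ 2),
    (1 + u ^ 2 + v ^ 2) / (1 - u ^ 2 - v ^ 2)]

section InvStereographic

variable {u v : ℝ}

theorem invStereographic_sl2Killing_self (hs : 1 - u ^ 2 - v ^ 2 ≠ 0) :
    invStereographic u v ⬝ᵥ sl2Killing *ᵥ invStereographic u v = -1 := by
  rw [dotProduct_sl2Killing_mulVec]
  simp only [invStereographic, cons_val_zero, cons_val_one, cons_val_two, head_cons, tail_cons]
  field_simp
  ring

theorem one_add_invStereographic_two (hs : 1 - u ^ 2 - v ^ 2 ≠ 0) :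
    1 + invStereographic u v 2 = 2 / (1 - u ^ 2 - v ^ 2) := by
  simp only [invStereographic, cons_val_two, tail_cons, head_cons]
  field_simp
  ring

theorem dotProduct_invStereographic_u (hs : 1 - u ^ 2 - v ^ 2 ≠ 0) :
    ![1, 0, -u] ⬝ᵥ invStereographic u v = u := by
  simp only [invStereographic, dotProduct, Fin.sum_univ_three, cons_val_zero, cons_val_one,
    cons_val_two, head_cons, tail_cons]
  field_simp
  ring

theorem dotProduct_invStereographic_v (hs : 1 - u ^ 2 - v ^ 2 ≠ 0) :
    ![0, 1, -v] ⬝ᵥ invStereographic u v = v := by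
  simp only [invStereographic, dotProduct, Fin.sum_univ_three, cons_val_zero, cons_val_one,
    cons_val_two, head_cons, tail_cons]
  field_simp
  ring

end InvStereographic

/-- In stereographic disc coordinates `(u,v)` (with `u²+v² < 1`,
`s = 1−u²−v²`) on the upper sheet `ℍ²` of `x²+y²−z² = −1`, the 2×2 matrix `T` of the
co-metric double bracket tensor restricted to `T*ℍ²` is invertible with
`T⁻¹ = (8/s²)·I₂`: the double bracket metric is `τ_db = (8/(1−u²−v²)²)(du²+dv²)`,
twice the hyperbolic metric of the Poincaré disc. -/
theorem sl2_double_bracket_metric_poincare_disc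
    (u v : ℝ) (h : u ^ 2 + v ^ 2 < 1) :
    let s : ℝ := 1 - u ^ 2 - v ^ 2
    let x : ℝ := 2 * u / s
    let y : ℝ := 2 * v / s
    let z : ℝ := (1 + u ^ 2 + v ^ 2) / s
    let M : Matrix (Fin 3) (Fin 3) ℝ :=
      (1 / 2 : ℝ) •
        !![z ^ 2 - y ^ 2, x * y, x * z;
           x * y, z ^ 2 - x ^ 2, y * z;
           x * z, y * z, x ^ 2 + y ^ 2]
    let αu : Fin 3 → ℝ := ![1 / (1 + z), 0, -x / (1 + z) ^ 2]
    let αv : Fin 3 → ℝ := ![0, 1 / (1 + z), -y / (1 + z) ^ 2]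
    let T : Matrix (Fin 2) (Fin 2) ℝ :=
      !![αu ⬝ᵥ M.mulVec αu, αu ⬝ᵥ M.mulVec αv;
         αu ⬝ᵥ M.mulVec αv, αv ⬝ᵥ M.mulVec αv]
    IsUnit T ∧ T⁻¹ = (8 / s ^ 2) • (1 : Matrix (Fin 2) (Fin 2) ℝ) := by
  intro s x y z M αu αv T
  have hs : s ≠ 0 := by simp only [s]; linarith
  have hM : M = (1 / 2 : ℝ) •
      (vecMulVec (invStereographic u v) (invStereographic u v) - (-1 : ℝ) • sl2Killing) := by
    rw [← invStereographic_sl2Killing_self hs]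
    exact congrArg ((1 / 2 : ℝ) • ·) (sl2DoubleBracket_eq_vecMulVec_sub x y z)
  have hz : 1 + z = 2 / s := one_add_invStereographic_two hs
  have hαu : αu = (s / 2) • ![1, 0, -u] := by
    ext i; fin_cases i <;> simp [αu, hz, x]; field_simp
  have hαv : αv = (s / 2) • ![0, 1, -v] := by
    ext i; fin_cases i <;> simp [αv, hz, y]; field_simp
  have hform : ∀ a b : Fin 3 → ℝ, ((s / 2) • a) ⬝ᵥ M *ᵥ ((s / 2) • b) =
      s ^ 2 / 8 * ((a ⬝ᵥ invStereographic u v) * (b ⬝ᵥ invStereographic u v) +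
        a ⬝ᵥ sl2Killing *ᵥ b) := by
    intro a b
    rw [hM, smul_mulVec, mulVec_smul, smul_dotProduct, dotProduct_smul, dotProduct_smul,
      dotProduct_vecMulVec_sub_smul_mulVec, dotProduct_comm _ b]
    simp only [smul_eq_mul]
    ring
  have hT : T = (s ^ 2 / 8) • 1 := by
    simp only [T, hαu, hαv, hform, dotProduct_invStereographic_u hs,
      dotProduct_invStereographic_v hs, dotProduct_sl2Killing_mulVec]
    ext i j; fin_cases i <;> fin_cases j <;> simp
  rw [hT, ← inv_div (s ^ 2)]
  exact isUnit_smul_one_and_inv_eq (by positivity)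
end

section
/- Fix c > 0 and let σ(u,ν) = (c sinh ν cos u, c sinh ν sin u, c cosh ν) parametrize the upper sheet ℍ²_c of x²+y²−z² = −c². Then: (i) the Jacobian Jσ(u,ν) satisfies Jσᵀ · diag(1,1,−1) · Jσ = diag(c² sinh²ν, c²), i.e. the induced Killing metric is c²(cosh²ν − 1)du² + c²dν²; and (ii) for ν ≠ 0, at (x,y,z) = σ(u,ν), with M(x,y,z) = (1/2)·((z²−y², xy, xz), (xy, z²−x², yz), (xz, yz, x²+y²)), α_u = (−y/(x²+y²), x/(x²+y²), 0) and α_ν = (0, 0, 1/(c sinh ν)), one has α_uᵀMα_u = 1/(2 sinh²ν), α_νᵀMα_ν = 1/2, α_uᵀMα_ν = 0; hence the double bracket metric is τ_db = 2(cosh²ν − 1)du² + 2dν². In particular the double bracket metric and the induced metric on ℍ²_c differ unless c² = 2. -/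
/-!
Part (i) is the chain rule: the columns of `Jσ` are the partial derivatives of `σ`, and their
Minkowski Gram matrix reduces to `diag(c² sinh²ν, c²)` by `sin² + cos² = 1` and
`cosh² − sinh² = 1`.

For (ii), write `r² = x² + y²`. At any point with `r ≠ 0` the covector `du = (−y, x, 0)/r²`
has `du·M·du = (z² − r²)/(2r²)`, a vertical covector `(0, 0, w)` has `w² r²/2`, and the mixed
term vanishes identically. On `ℍ²_c` we have `r² = c² sinh²ν` and `z² − r² = c²`, so the
restricted co-metric is `diag(1/(2 sinh²ν), 1/2)`, whose inverse is `diag(2 sinh²ν, 2)`.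
Comparing the `dν²` coefficients, the two metrics agree exactly when `c² = 2`.
-/

open Matrix Real

noncomputable def jacobian {𝕜 ι κ : Type*} [NontriviallyNormedField 𝕜] [Fintype ι] [DecidableEq ι]
    [Fintype κ] (f : (ι → 𝕜) → (κ → 𝕜)) (p : ι → 𝕜) : Matrix κ ι 𝕜 :=
  Matrix.of fun i j => fderiv 𝕜 f p (Pi.single j 1) i

theorem jacobian_apply_eq_deriv {𝕜 ι κ : Type*} [NontriviallyNormedField 𝕜] [Fintype ι] [Fintype κ]
    [DecidableEq ι] {f : (ι → 𝕜) → (κ → 𝕜)} {p : ι → 𝕜} (hf : DifferentiableAt 𝕜 f p)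
    (i : κ) (j : ι) :
    jacobian f p i j = deriv (fun t => f (Function.update p j t) i) (p j) := by
  have hf' : HasFDerivAt f (fderiv 𝕜 f p) (Function.update p j (p j)) := by
    rw [Function.update_eq_self]
    exact hf.hasFDerivAt
  have hline := hf'.comp_hasDerivAt (p j) (hasDerivAt_update p j (p j))
  exact (hasDerivAt_pi.1 hline i).deriv.symm

noncomputable def hyperboloidParam (c : ℝ) (p : Fin 2 → ℝ) : Fin 3 → ℝ :=
  ![c * sinh (p 1) * cos (p 0), c * sinh (p 1) * sin (p 0), c * cosh (p 1)]

theorem differentiable_hyperboloidParam (c : ℝ) : Differentiable ℝ (hyperboloidParam c) := by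
  refine differentiable_pi.2 fun i => ?_
  fin_cases i <;>
    simp only [hyperboloidParam, Fin.zero_eta, Fin.mk_one, Fin.reduceFinMk, cons_val_zero, cons_val_one,
      cons_val] <;>
    fun_prop

theorem jacobian_hyperboloidParam (c u ν : ℝ) :
    jacobian (hyperboloidParam c) ![u, ν] =
      !![-(c * sinh ν * sin u), c * cosh ν * cos u;
         c * sinh ν * cos u, c * cosh ν * sin u;
         0, c * sinh ν] := by
  ext i j
  rw [jacobian_apply_eq_deriv ((differentiable_hyperboloidParam c).differentiableAt)]
  fin_cases i <;> fin_cases j <;> simp [hyperboloidParam]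

theorem jacobian_hyperboloidParam_minkowski (c u ν : ℝ) :
    (jacobian (hyperboloidParam c) ![u, ν])ᵀ * diagonal ![(1 : ℝ), 1, -1] *
        jacobian (hyperboloidParam c) ![u, ν] = diagonal ![c ^ 2 * sinh ν ^ 2, c ^ 2] := by
  rw [jacobian_hyperboloidParam]
  ext i j
  fin_cases i <;> fin_cases j <;>
    simp only [mul_apply, transpose_apply, of_apply, diagonal_apply, Fin.sum_univ_three,
      Fin.zero_eta, Fin.mk_one, cons_val_zero, cons_val_one, cons_val, Fin.reduceEq, ite_true, ite_false]
  · linear_combination c ^ 2 * sinh ν ^ 2 * sin_sq_add_cos_sq u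
  · ring
  · ring
  · linear_combination c ^ 2 * cosh ν ^ 2 * sin_sq_add_cos_sq u + c ^ 2 * cosh_sq_sub_sinh_sq ν

noncomputable def doubleBracketCometric (x y z : ℝ) : Matrix (Fin 3) (Fin 3) ℝ :=
  (1 / 2 : ℝ) •
    !![z ^ 2 - y ^ 2, x * y, x * z;
       x * y, z ^ 2 - x ^ 2, y * z;
       x * z, y * z, x ^ 2 + y ^ 2]

/-- The differential of the polar angle of `(x, y)`. -/
noncomputable def angularCovector (x y : ℝ) : Fin 3 → ℝ :=
  ![-y / (x ^ 2 + y ^ 2), x / (x ^ 2 + y ^ 2), 0]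

theorem angularCovector_doubleBracketCometric_angularCovector {x y : ℝ} (z : ℝ)
    (hxy : x ^ 2 + y ^ 2 ≠ 0) :
    angularCovector x y ⬝ᵥ doubleBracketCometric x y z *ᵥ angularCovector x y =
      (z ^ 2 - (x ^ 2 + y ^ 2)) / (2 * (x ^ 2 + y ^ 2)) := by
  simp only [dotProduct, mulVec, angularCovector, doubleBracketCometric, Matrix.smul_apply, of_apply,
    smul_eq_mul, Fin.sum_univ_three, cons_val_zero, cons_val_one, cons_val]
  field_simp
  ring

theorem angularCovector_doubleBracketCometric_vertical (x y z w : ℝ) :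
    angularCovector x y ⬝ᵥ doubleBracketCometric x y z *ᵥ ![0, 0, w] = 0 := by
  simp only [dotProduct, mulVec, angularCovector, doubleBracketCometric, Matrix.smul_apply, of_apply,
    smul_eq_mul, Fin.sum_univ_three, cons_val_zero, cons_val_one, cons_val]
  ring

theorem vertical_doubleBracketCometric_vertical (x y z w : ℝ) :
    ![0, 0, w] ⬝ᵥ doubleBracketCometric x y z *ᵥ ![0, 0, w] = w ^ 2 * (x ^ 2 + y ^ 2) / 2 := by
  simp only [dotProduct, mulVec, doubleBracketCometric, Matrix.smul_apply, of_apply,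
    smul_eq_mul, Fin.sum_univ_three, cons_val_zero, cons_val_one, cons_val]
  ring

theorem inv_fin_two_diagonal {K : Type*} [Field K] {a b : K} (ha : a ≠ 0) (hb : b ≠ 0) :
    (!![a, 0; 0, b])⁻¹ = diagonal ![a⁻¹, b⁻¹] := by
  refine inv_eq_left_inv ?_
  ext i j
  fin_cases i <;> fin_cases j <;> simp [ha, hb]

theorem forall_inducedMetric_eq_doubleBracketMetric_iff (c : ℝ) :
    (∀ w : ℝ, diagonal ![c ^ 2 * sinh w ^ 2, c ^ 2] =
        (diagonal ![2 * (cosh w ^ 2 - 1), 2] : Matrix (Fin 2) (Fin 2) ℝ)) ↔ c ^ 2 = 2 := by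
  refine ⟨fun h => by simpa using congr_fun (diagonal_injective (h 0)) 1, fun h w => ?_⟩
  rw [h, cosh_sq, add_sub_cancel_right, mul_comm]

/-- For `c > 0` and the parametrization
`σ(u,ν) = (c sinh ν cos u, c sinh ν sin u, c cosh ν)` of the upper sheet `ℍ²_c` of
`x²+y²−z² = −c²`: (i) `Jσᵀ·diag(1,1,−1)·Jσ = diag(c² sinh²ν, c²)` (induced Killing
metric `c²(cosh²ν−1)du² + c²dν²`); (ii) for `ν ≠ 0`, with `M` the co-metric double
bracket tensor matrix and `α_u, α_ν` the differentials of the coordinates,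
`α_uᵀMα_u = 1/(2 sinh²ν)`, `α_νᵀMα_ν = 1/2`, `α_uᵀMα_ν = 0`, hence the double bracket
metric is `2(cosh²ν−1)du² + 2dν²`; in particular it differs from the induced metric
unless `c² = 2`. -/
theorem sl2_metrics_on_two_sheeted_hyperboloid
    (c u ν : ℝ) (hc : 0 < c) (hν : ν ≠ 0) :
    let σ : (Fin 2 → ℝ) → (Fin 3 → ℝ) := fun p =>
      ![c * Real.sinh (p 1) * Real.cos (p 0),
        c * Real.sinh (p 1) * Real.sin (p 0),
        c * Real.cosh (p 1)]
    let Jσ : Matrix (Fin 3) (Fin 2) ℝ :=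
      Matrix.of fun i j => fderiv ℝ σ ![u, ν] (Pi.single j 1) i
    let x : ℝ := c * Real.sinh ν * Real.cos u
    let y : ℝ := c * Real.sinh ν * Real.sin u
    let z : ℝ := c * Real.cosh ν
    let M : Matrix (Fin 3) (Fin 3) ℝ :=
      (1 / 2 : ℝ) •
        !![z ^ 2 - y ^ 2, x * y, x * z;
           x * y, z ^ 2 - x ^ 2, y * z;
           x * z, y * z, x ^ 2 + y ^ 2]
    let αu : Fin 3 → ℝ := ![-y / (x ^ 2 + y ^ 2), x / (x ^ 2 + y ^ 2), 0]
    let αν : Fin 3 → ℝ := ![0, 0, 1 / (c * Real.sinh ν)]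
    -- (i) the induced Killing metric is c²(cosh²ν − 1)du² + c²dν²:
    (Jσᵀ * Matrix.diagonal ![(1 : ℝ), 1, -1] * Jσ =
        Matrix.diagonal ![c ^ 2 * Real.sinh ν ^ 2, c ^ 2]) ∧
    -- (ii) the restricted co-metric double bracket tensor:
    (αu ⬝ᵥ M.mulVec αu = 1 / (2 * Real.sinh ν ^ 2)) ∧
    (αν ⬝ᵥ M.mulVec αν = 1 / 2) ∧
    (αu ⬝ᵥ M.mulVec αν = 0) ∧
    -- hence the double bracket metric is 2(cosh²ν − 1)du² + 2dν²:
    ((!![αu ⬝ᵥ M.mulVec αu, αu ⬝ᵥ M.mulVec αν;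
         αu ⬝ᵥ M.mulVec αν, αν ⬝ᵥ M.mulVec αν] : Matrix (Fin 2) (Fin 2) ℝ)⁻¹ =
        Matrix.diagonal ![2 * (Real.cosh ν ^ 2 - 1), 2]) ∧
    -- in particular the two metrics differ unless c² = 2:
    ((∀ w : ℝ, Matrix.diagonal ![c ^ 2 * Real.sinh w ^ 2, c ^ 2] =
        (Matrix.diagonal ![2 * (Real.cosh w ^ 2 - 1), 2] : Matrix (Fin 2) (Fin 2) ℝ)) ↔
      c ^ 2 = 2) := by
  intro σ Jσ x y z M αu αν
  have hs : sinh ν ≠ 0 := sinh_ne_zero.2 hν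
  have hr : x ^ 2 + y ^ 2 = c ^ 2 * sinh ν ^ 2 := by
    simp only [x, y]
    linear_combination c ^ 2 * sinh ν ^ 2 * sin_sq_add_cos_sq u
  have hz : z ^ 2 - (x ^ 2 + y ^ 2) = c ^ 2 := by
    simp only [z, hr]
    linear_combination c ^ 2 * cosh_sq_sub_sinh_sq ν
  have huu : αu ⬝ᵥ M *ᵥ αu = 1 / (2 * sinh ν ^ 2) := by
    calc αu ⬝ᵥ M *ᵥ αu = (z ^ 2 - (x ^ 2 + y ^ 2)) / (2 * (x ^ 2 + y ^ 2)) :=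
          angularCovector_doubleBracketCometric_angularCovector z (by rw [hr]; positivity)
      _ = 1 / (2 * sinh ν ^ 2) := by
        rw [hz, hr]
        field_simp
  have hvv : αν ⬝ᵥ M *ᵥ αν = 1 / 2 := by
    calc αν ⬝ᵥ M *ᵥ αν = (1 / (c * sinh ν)) ^ 2 * (x ^ 2 + y ^ 2) / 2 :=
          vertical_doubleBracketCometric_vertical x y z _
      _ = 1 / 2 := by
        rw [hr]
        field_simp
  have huv : αu ⬝ᵥ M *ᵥ αν = 0 := angularCovector_doubleBracketCometric_vertical x y z _
  refine ⟨jacobian_hyperboloidParam_minkowski c u ν, huu, hvv, huv, ?_, forall_inducedMetric_eq_doubleBracketMetric_iff c⟩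
  rw [huu, hvv, huv, inv_fin_two_diagonal (by positivity) (by norm_num), cosh_sq]
  simp
end

section
/- Fix l > 0 and let σ(u,ν) = (l cosh ν cos u, l cosh ν sin u, l sinh ν) parametrize the one-sheeted hyperboloid ℋ_l given by x²+y²−z² = l². Then: (i) the Jacobian Jσ(u,ν) satisfies Jσᵀ · diag(1,1,−1) · Jσ = diag(l² cosh²ν, −l²), i.e. the induced Killing metric is l² cosh²ν du² − l² dν²; and (ii) at (x,y,z) = σ(u,ν), with M(x,y,z) = (1/2)·((z²−y², xy, xz), (xy, z²−x², yz), (xz, yz, x²+y²)), α_u = (−y/(x²+y²), x/(x²+y²), 0) and α_ν = (0, 0, 1/(l cosh ν)), one has α_uᵀMα_u = −1/(2 cosh²ν), α_νᵀMα_ν = 1/2, α_uᵀMα_ν = 0; hence the double bracket metric is τ_db = −2cosh²ν du² + 2dν². -/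
/-!
The Jacobian of `σ` is read off componentwise from the chain rule. At `σ(u, ν)` one has
`x² + y² = l² cosh² ν` and `x² + y² − z² = l²`, and every entry of both metrics reduces to these
two identities: `M α_u` is a multiple of `(y, −x, 0)` with factor `(x² + y² − z²) / (2(x² + y²))`,
and `M α_ν` is orthogonal to `α_u`. The resulting Gram matrix `(αᵢᵀ M αⱼ)` is diagonal, so its
inverse is taken entrywise.
-/

open Matrix

section Jacobian

variable {𝕜 ι κ : Type*} [NontriviallyNormedField 𝕜] [Fintype ι] [DecidableEq ι]

theorem jacobian_eq_of_hasFDerivAt_apply {f : (ι → 𝕜) → κ → 𝕜} {p : ι → 𝕜}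
    {D : Matrix κ ι 𝕜}
    (hf : ∀ i, HasFDerivAt (fun q => f q i)
      (∑ j, D i j • ContinuousLinearMap.proj (R := 𝕜) (φ := fun _ : ι => 𝕜) j) p) :
    Matrix.of (fun i j => fderiv 𝕜 f p (Pi.single j 1) i) = D := by
  have hD : HasFDerivAt f (ContinuousLinearMap.pi fun i =>
      ∑ j, D i j • ContinuousLinearMap.proj (R := 𝕜) (φ := fun _ : ι => 𝕜) j) p :=
    hasFDerivAt_pi (φ := fun i q => f q i) |>.2 hf
  ext i j
  simp [hD.fderiv, Pi.single_apply]

end Jacobian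

namespace OneSheetedHyperboloid

noncomputable section

open Real

def param (l : ℝ) (p : Fin 2 → ℝ) : Fin 3 → ℝ :=
  ![l * cosh (p 1) * cos (p 0), l * cosh (p 1) * sin (p 0), l * sinh (p 1)]

def jacobian (l u ν : ℝ) : Matrix (Fin 3) (Fin 2) ℝ :=
  !![-(l * cosh ν * sin u), l * sinh ν * cos u;
     l * cosh ν * cos u, l * sinh ν * sin u;
     0, l * cosh ν]

theorem hasFDerivAt_param_apply (l u ν : ℝ) (i : Fin 3) :
    HasFDerivAt (fun p => param l p i)
      (∑ j, jacobian l u ν i j • ContinuousLinearMap.proj (R := ℝ) (φ := fun _ : Fin 2 => ℝ) j)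
      ![u, ν] := by
  have hu : HasFDerivAt (fun p : Fin 2 → ℝ => p 0) (ContinuousLinearMap.proj 0) ![u, ν] :=
    hasFDerivAt_apply (𝕜 := ℝ) 0 _
  have hν : HasFDerivAt (fun p : Fin 2 → ℝ => p 1) (ContinuousLinearMap.proj 1) ![u, ν] :=
    hasFDerivAt_apply (𝕜 := ℝ) 1 _
  rw [Fin.sum_univ_two]
  match i with
  | 0 =>
    refine ((hν.cosh.const_mul l).mul hu.cos).congr_fderiv ?_
    simp only [jacobian, of_apply, cons_val_zero, cons_val_one]
    module
  | 1 =>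
    refine ((hν.cosh.const_mul l).mul hu.sin).congr_fderiv ?_
    simp only [jacobian, of_apply, cons_val_zero, cons_val_one]
    module
  | 2 =>
    refine (hν.sinh.const_mul l).congr_fderiv ?_
    simp only [jacobian, of_apply, cons_val_zero, cons_val_one, cons_val_two, tail_cons, head_cons]
    module

theorem jacobian_param (l u ν : ℝ) :
    Matrix.of (fun i j => fderiv ℝ (param l) ![u, ν] (Pi.single j 1) i) = jacobian l u ν :=
  jacobian_eq_of_hasFDerivAt_apply (hasFDerivAt_param_apply l u ν)

theorem jacobian_transpose_mul_killing_mul_jacobian (l u ν : ℝ) :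
    (jacobian l u ν)ᵀ * diagonal ![(1 : ℝ), 1, -1] * jacobian l u ν =
      diagonal ![l ^ 2 * cosh ν ^ 2, -l ^ 2] := by
  rw [diagonal_vec2]
  ext i j
  fin_cases i <;> fin_cases j <;>
    simp only [jacobian, mul_apply, transpose_apply, diagonal_apply, Fin.sum_univ_three, of_apply,
      cons_val', cons_val_zero, cons_val_one, cons_val, cons_val_fin_one, Fin.zero_eta, Fin.mk_one,
      Fin.isValue, Fin.reduceEq, if_true, if_false]
  · linear_combination (l ^ 2 * cosh ν ^ 2) * sin_sq_add_cos_sq u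
  · ring
  · ring
  · linear_combination
      (l ^ 2 * sinh ν ^ 2) * sin_sq_add_cos_sq u - l ^ 2 * cosh_sq_sub_sinh_sq ν

theorem param_sq_add_sq (l u ν : ℝ) :
    (l * cosh ν * cos u) ^ 2 + (l * cosh ν * sin u) ^ 2 = l ^ 2 * cosh ν ^ 2 := by
  linear_combination (l ^ 2 * cosh ν ^ 2) * cos_sq_add_sin_sq u

theorem param_sq_add_sq_sub_sq (l u ν : ℝ) :
    (l * cosh ν * cos u) ^ 2 + (l * cosh ν * sin u) ^ 2 - (l * sinh ν) ^ 2 = l ^ 2 := by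
  linear_combination param_sq_add_sq l u ν + l ^ 2 * cosh_sq_sub_sinh_sq ν

end

end OneSheetedHyperboloid

namespace SL2DoubleBracket

noncomputable section

def cometric (x y z : ℝ) : Matrix (Fin 3) (Fin 3) ℝ :=
  (1 / 2 : ℝ) •
    !![z ^ 2 - y ^ 2, x * y, x * z;
       x * y, z ^ 2 - x ^ 2, y * z;
       x * z, y * z, x ^ 2 + y ^ 2]

/-- The differential of the polar angle of `(x, y)`. -/
def angleCovector (x y : ℝ) : Fin 3 → ℝ :=
  ![-y / (x ^ 2 + y ^ 2), x / (x ^ 2 + y ^ 2), 0]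

theorem cometric_mulVec_angleCovector (x y z : ℝ) :
    cometric x y z *ᵥ angleCovector x y =
      ((x ^ 2 + y ^ 2 - z ^ 2) / (x ^ 2 + y ^ 2) / 2) • ![y, -x, 0] := by
  ext i
  fin_cases i <;>
    simp only [cometric, angleCovector, mulVec, dotProduct, Fin.sum_univ_three, Pi.smul_apply,
      Matrix.smul_apply, smul_eq_mul, of_apply, cons_val', cons_val_zero, cons_val_one,
      cons_val_two, tail_cons, head_cons, Fin.zero_eta, Fin.mk_one, Fin.reduceFinMk] <;>
    ring

theorem angleCovector_dotProduct_cometric_mulVec_angleCovector {x y : ℝ} (z : ℝ)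
    (hr : x ^ 2 + y ^ 2 ≠ 0) :
    angleCovector x y ⬝ᵥ cometric x y z *ᵥ angleCovector x y =
      -((x ^ 2 + y ^ 2 - z ^ 2) / (2 * (x ^ 2 + y ^ 2))) := by
  rw [cometric_mulVec_angleCovector, dotProduct_smul, angleCovector]
  simp only [dotProduct, Fin.sum_univ_three, smul_eq_mul, cons_val_zero, cons_val_one,
    cons_val_two, tail_cons, head_cons]
  field_simp
  ring

theorem angleCovector_dotProduct_cometric_mulVec_vertical (x y z c : ℝ) :
    angleCovector x y ⬝ᵥ cometric x y z *ᵥ ![0, 0, c] = 0 := by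
  simp only [angleCovector, cometric, mulVec, dotProduct, Fin.sum_univ_three, Matrix.smul_apply,
    smul_eq_mul, of_apply, cons_val', cons_val_zero, cons_val_one, cons_val_two, tail_cons,
    head_cons]
  ring

theorem vertical_dotProduct_cometric_mulVec_vertical (x y z c : ℝ) :
    ![0, 0, c] ⬝ᵥ cometric x y z *ᵥ ![0, 0, c] = c ^ 2 * (x ^ 2 + y ^ 2) / 2 := by
  simp only [cometric, mulVec, dotProduct, Fin.sum_univ_three, Matrix.smul_apply, smul_eq_mul,
    of_apply, cons_val', cons_val_zero, cons_val_one, cons_val_two, tail_cons, head_cons]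
  ring

end

end SL2DoubleBracket

open OneSheetedHyperboloid SL2DoubleBracket

/-- For `l > 0` and the parametrization
`σ(u,ν) = (l cosh ν cos u, l cosh ν sin u, l sinh ν)` of the one-sheeted hyperboloid
`ℋ_l : x²+y²−z² = l²`: (i) `Jσᵀ·diag(1,1,−1)·Jσ = diag(l² cosh²ν, −l²)` (induced
Killing metric `l² cosh²ν du² − l² dν²`); (ii) with `M` the co-metric double bracket
tensor matrix and `α_u, α_ν` the differentials of the coordinates,
`α_uᵀMα_u = −1/(2 cosh²ν)`, `α_νᵀMα_ν = 1/2`, `α_uᵀMα_ν = 0`, hence the double bracket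
metric is `−2cosh²ν du² + 2dν²`. -/
theorem sl2_metrics_on_one_sheeted_hyperboloid
    (l u ν : ℝ) (hl : 0 < l) :
    let σ : (Fin 2 → ℝ) → (Fin 3 → ℝ) := fun p =>
      ![l * Real.cosh (p 1) * Real.cos (p 0),
        l * Real.cosh (p 1) * Real.sin (p 0),
        l * Real.sinh (p 1)]
    let Jσ : Matrix (Fin 3) (Fin 2) ℝ :=
      Matrix.of fun i j => fderiv ℝ σ ![u, ν] (Pi.single j 1) i
    let x : ℝ := l * Real.cosh ν * Real.cos u
    let y : ℝ := l * Real.cosh ν * Real.sin u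
    let z : ℝ := l * Real.sinh ν
    let M : Matrix (Fin 3) (Fin 3) ℝ :=
      (1 / 2 : ℝ) •
        !![z ^ 2 - y ^ 2, x * y, x * z;
           x * y, z ^ 2 - x ^ 2, y * z;
           x * z, y * z, x ^ 2 + y ^ 2]
    let αu : Fin 3 → ℝ := ![-y / (x ^ 2 + y ^ 2), x / (x ^ 2 + y ^ 2), 0]
    let αν : Fin 3 → ℝ := ![0, 0, 1 / (l * Real.cosh ν)]
    -- (i) the induced Killing metric is l² cosh²ν du² − l² dν²:
    (Jσᵀ * Matrix.diagonal ![(1 : ℝ), 1, -1] * Jσ =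
        Matrix.diagonal ![l ^ 2 * Real.cosh ν ^ 2, -l ^ 2]) ∧
    -- (ii) the restricted co-metric double bracket tensor:
    (αu ⬝ᵥ M.mulVec αu = -(1 / (2 * Real.cosh ν ^ 2))) ∧
    (αν ⬝ᵥ M.mulVec αν = 1 / 2) ∧
    (αu ⬝ᵥ M.mulVec αν = 0) ∧
    -- hence the double bracket metric is −2cosh²ν du² + 2dν²:
    ((!![αu ⬝ᵥ M.mulVec αu, αu ⬝ᵥ M.mulVec αν;
         αu ⬝ᵥ M.mulVec αν, αν ⬝ᵥ M.mulVec αν] : Matrix (Fin 2) (Fin 2) ℝ)⁻¹ =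
        Matrix.diagonal ![-2 * Real.cosh ν ^ 2, 2]) := by
  intro σ Jσ x y z M αu αν
  have hr : x ^ 2 + y ^ 2 = l ^ 2 * Real.cosh ν ^ 2 := param_sq_add_sq l u ν
  have hz : x ^ 2 + y ^ 2 - z ^ 2 = l ^ 2 := param_sq_add_sq_sub_sq l u ν
  have hr0 : x ^ 2 + y ^ 2 ≠ 0 := hr ▸ by positivity
  have huu : αu ⬝ᵥ M *ᵥ αu = -(1 / (2 * Real.cosh ν ^ 2)) :=
    (angleCovector_dotProduct_cometric_mulVec_angleCovector z hr0).trans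
      (by rw [hz, hr]; field_simp)
  have hνν : αν ⬝ᵥ M *ᵥ αν = 1 / 2 :=
    (vertical_dotProduct_cometric_mulVec_vertical x y z _).trans (by rw [hr]; field_simp)
  have huν : αu ⬝ᵥ M *ᵥ αν = 0 := angleCovector_dotProduct_cometric_mulVec_vertical x y z _
  have hJ : Jσ = jacobian l u ν := jacobian_param l u ν
  refine ⟨hJ ▸ jacobian_transpose_mul_killing_mul_jacobian l u ν, huu, hνν, huν, ?_⟩
  rw [huu, hνν, huν, ← diagonal_vec2]
  refine inv_eq_right_inv ?_
  rw [diagonal_mul_diagonal, ← diagonal_one]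
  congr 1
  ext i
  fin_cases i <;> simp [field]
end
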